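/- For each 1 ≤ p < ∞ and each van Hove sequence 𝒜, the space Bap^p_𝒜(G) is closed in BL^p_𝒜(G) with respect to the seminorm ‖·‖_{b,p,𝒜}: if f_n ∈ Bap^p_𝒜(G), f ∈ BL^p_𝒜(G) and ‖f_n − f‖_{b,p,𝒜} → 0, then f ∈ Bap^p_𝒜(G). Consequently, the quotient of Bap^p_𝒜(G) by the subspace of elements of seminorm zero, equipped with the induced norm, is a Banach space. -/

import Mathlib

open MeasureTheory Filter Topology
open scoped ENNReal Pointwise

noncomputable section

namespace MAP

section Defs

variable {G : Type*} [MeasurableSpace G] [TopologicalSpace G] [AddCommGroup G]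

/-- The `K`-boundary `∂^K A` of a set `A`. -/
def kBoundary (K A : Set G) : Set G :=
  (closure (A + K) \ A) ∪ ((Aᶜ - K) ∩ closure A)

/-- A van Hove sequence: nonempty relatively compact open sets whose `K`-boundaries
become negligible compared to their volume. -/
structure IsVanHove (θ : Measure G) (A : ℕ → Set G) : Prop where
  isOpen : ∀ n, IsOpen (A n)
  nonempty : ∀ n, (A n).Nonempty
  relCompact : ∀ n, IsCompact (closure (A n))
  boundary : ∀ K : Set G, IsCompact K →
    Tendsto (fun n => θ (kBoundary K (A n)) / θ (A n)) atTop (𝓝 0)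

/-- `(1/θ(A)) ∫_A |f|^p`, valued in `ℝ≥0∞`. -/
def lpAvg (θ : Measure G) (A : Set G) (p : ℝ) (f : G → ℂ) : ℝ≥0∞ :=
  (∫⁻ t in A, ENNReal.ofReal (‖f t‖ ^ p) ∂θ) / θ A

/-- The Besicovitch seminorm `‖f‖_{b,p,𝒜}`. -/
def besSN (θ : Measure G) (A : ℕ → Set G) (p : ℝ) (f : G → ℂ) : ℝ≥0∞ :=
  (limsup (fun n => lpAvg θ (A n) p f) atTop) ^ (1 / p)

/-- The Weyl seminorm `‖f‖_{w,p,𝒜}`. -/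
def weylSN (θ : Measure G) (A : ℕ → Set G) (p : ℝ) (f : G → ℂ) : ℝ≥0∞ :=
  (limsup (fun n => ⨆ x : G, lpAvg θ (x +ᵥ A n) p f) atTop) ^ (1 / p)

/-- Membership in `L^p_loc`. -/
def MemLpLoc (θ : Measure G) (p : ℝ) (f : G → ℂ) : Prop :=
  AEStronglyMeasurable f θ ∧
    ∀ K : Set G, IsCompact K → (∫⁻ t in K, ENNReal.ofReal (‖f t‖ ^ p) ∂θ) < ⊤

/-- A relatively dense subset of `G`. -/
def RelDense (S : Set G) : Prop :=
  ∃ K : Set G, IsCompact K ∧ ∀ g : G, ∃ t ∈ S, g - t ∈ K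

/-- Mean almost periodicity of a function with respect to a van Hove sequence. -/
def MeanAP (θ : Measure G) (A : ℕ → Set G) (f : G → ℂ) : Prop :=
  ∀ ε : ℝ, 0 < ε →
    RelDense {t : G | besSN θ A 1 (fun s => f s - f (s - t)) < ENNReal.ofReal ε}

/-- `C_c(G)`: continuous compactly supported functions. -/
def IsCc (φ : G → ℂ) : Prop := Continuous φ ∧ HasCompactSupport φ

/-- `(1/θ(A)) ∫_A f`, valued in `ℂ`. -/
def cAvg (θ : Measure G) (A : Set G) (f : G → ℂ) : ℂ :=
  (∫ t in A, f t ∂θ) / ((θ A).toReal : ℂ)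

/-- `(1/θ(A)) ∫_{s+A} f`, valued in `ℂ`. -/
def shiftAvg (θ : Measure G) (A : Set G) (s : G) (f : G → ℂ) : ℂ :=
  (∫ t in s +ᵥ A, f t ∂θ) / ((θ A).toReal : ℂ)

/-- `(1/θ(A)) ∫_{s+A} f` for a real-valued `f`. -/
def shiftAvgR (θ : Measure G) (A : Set G) (s : G) (f : G → ℝ) : ℝ :=
  (∫ t in s +ᵥ A, f t ∂θ) / (θ A).toReal

/-- The mean `M_𝒜(f)` exists and equals `c`. -/
def MeanTendsto (θ : Measure G) (A : ℕ → Set G) (f : G → ℂ) (c : ℂ) : Prop :=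
  Tendsto (fun n => cAvg θ (A n) f) atTop (𝓝 c)

/-- The Dirac comb of a point set. -/
def diracComb (Λ : Set G) : Measure G := Measure.sum fun x : Λ => Measure.dirac (x : G)

/-- Convolution `(μ * φ)(t) = ∫ φ(t - s) dμ(s)` of a positive measure with a function. -/
def convM (μ : Measure G) (φ : G → ℂ) : G → ℂ := fun t => ∫ s, φ (t - s) ∂μ

/-- Uniform discreteness of a point set. -/
def UnifDiscrete (Λ : Set G) : Prop :=
  ∃ U : Set G, IsOpen U ∧ (0 : G) ∈ U ∧
    ∀ x ∈ Λ, ∀ y ∈ Λ, x ≠ y → (x +ᵥ U) ∩ (y +ᵥ U) = ∅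

/-- Delone sets: uniformly discrete and relatively dense. -/
def IsDelone (Λ : Set G) : Prop := UnifDiscrete Λ ∧ RelDense Λ

end Defs

section CharDefs

variable (G : Type*) [TopologicalSpace G] [AddCommGroup G]

/-- The set of continuous characters of `G`, inside `C(G, ℂ)`. -/
def CharSet : Set C(G, ℂ) :=
  {χ | (∀ x, ‖χ x‖ = 1) ∧ ∀ x y, χ (x + y) = χ x * χ y}

/-- The dual group `Ĝ` of continuous characters, with the compact-open topology. -/
abbrev Char : Type _ := ↥(CharSet G)

instance : MeasurableSpace (Char G) := borel _

instance : BorelSpace (Char G) := ⟨rfl⟩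

end CharDefs

section CharUse

variable {G : Type*} [MeasurableSpace G] [TopologicalSpace G] [AddCommGroup G]

/-- Trigonometric polynomials: finite linear combinations of characters. -/
def IsTrigPoly (P : G → ℂ) : Prop :=
  ∃ (n : ℕ) (c : Fin n → ℂ) (χ : Fin n → Char G),
    P = fun x => ∑ i, c i * ((χ i : C(G, ℂ)) x)

/-- Besicovitch `p`-almost periodicity of a function. -/
def BapMem (θ : Measure G) (A : ℕ → Set G) (p : ℝ) (f : G → ℂ) : Prop :=
  MemLpLoc θ p f ∧ ∀ ε : ℝ, 0 < ε →
    ∃ P : G → ℂ, IsTrigPoly P ∧ besSN θ A p (fun x => f x - P x) < ENNReal.ofReal ε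

/-- Weyl `p`-almost periodicity of a function. -/
def WapMem (θ : Measure G) (A : ℕ → Set G) (p : ℝ) (f : G → ℂ) : Prop :=
  MemLpLoc θ p f ∧ ∀ ε : ℝ, 0 < ε →
    ∃ P : G → ℂ, IsTrigPoly P ∧ weylSN θ A p (fun x => f x - P x) < ENNReal.ofReal ε

/-- The Fourier–Bohr coefficient of `f` at `χ` along `A` exists and equals `a`. -/
def FBTendsto (θ : Measure G) (A : ℕ → Set G) (f : G → ℂ) (χ : Char G) (a : ℂ) : Prop :=
  MeanTendsto θ A (fun t => (starRingEnd ℂ) ((χ : C(G, ℂ)) t) * f t) a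

/-- `φ̌(χ) = ∫ χ(t) φ(t) dt`. -/
def checkFn (θ : Measure G) (φ : G → ℂ) (χ : Char G) : ℂ :=
  ∫ t, (χ : C(G, ℂ)) t * φ t ∂θ

/-- `(φ * ψ̃)(x) = ∫ φ(x - y) conj(ψ(-y)) dy`. -/
def tildeConv (θ : Measure G) (φ ψ : G → ℂ) : G → ℂ :=
  fun x => ∫ y, φ (x - y) * (starRingEnd ℂ) (ψ (-y)) ∂θ

/-- A pure point measure. -/
def PurePointM {X : Type*} [MeasurableSpace X] (σ : Measure X) : Prop :=
  ∀ B : Set X, MeasurableSet B → σ B = ∑' x : B, σ {(x : X)}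

end CharUse

section TB

variable (Γ : Type*) [MeasurableSpace Γ] [TopologicalSpace Γ] [AddCommGroup Γ]

/-- A translation bounded complex (Radon) measure, given by its total variation
measure together with a unimodular density (polar decomposition). -/
structure TBMeasure where
  tv : Measure Γ
  dens : Γ → ℂ
  dens_meas : Measurable dens
  dens_norm : ∀ x, ‖dens x‖ = 1
  bounded : ∀ K : Set Γ, IsCompact K → ∃ C : ℝ≥0∞, C ≠ ⊤ ∧ ∀ t : Γ, tv (t +ᵥ K) ≤ C

end TB

section TBUse

variable {G : Type*} [MeasurableSpace G] [TopologicalSpace G] [AddCommGroup G]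

/-- `∫ f dμ` for a translation bounded complex measure. -/
def TBMeasure.integral (μ : TBMeasure G) (f : G → ℂ) : ℂ := ∫ x, f x * μ.dens x ∂μ.tv

/-- `(μ * φ)(t) = ∫ φ(t - s) dμ(s)`. -/
def TBMeasure.conv (μ : TBMeasure G) (φ : G → ℂ) : G → ℂ :=
  fun t => ∫ s, φ (t - s) * μ.dens s ∂μ.tv

/-- `(1/θ(A_n)) · (μ|_{A_n} * ν̃|_{-A_n})(φ)`, the `n`-th Eberlein pairing of `μ` with `ν̃`. -/
def ebPair (θ : Measure G) (A : ℕ → Set G) (μ ν : TBMeasure G) (φ : G → ℂ) (n : ℕ) : ℂ :=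
  (∫ s in A n, ∫ u in A n, φ (s - u) * μ.dens s * (starRingEnd ℂ) (ν.dens u) ∂ν.tv ∂μ.tv) /
    ((θ (A n)).toReal : ℂ)

/-- Fourier–Bohr coefficient of a translation bounded measure along `A`. -/
def FBTendstoM (θ : Measure G) (A : ℕ → Set G) (μ : TBMeasure G) (χ : Char G) (a : ℂ) : Prop :=
  Tendsto (fun n =>
      (∫ t in A n, (starRingEnd ℂ) ((χ : C(G, ℂ)) t) * μ.dens t ∂μ.tv) /
        ((θ (A n)).toReal : ℂ))
    atTop (𝓝 a)

/-- `σ` is the Fourier transform of the positive definite measure `γ`: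
`∫_{Ĝ} |φ̌|² dσ = ∫_G (φ * φ̃) dγ` for all `φ ∈ C_c(G)`. -/
def IsFTOf (θ : Measure G) (γ : TBMeasure G) (σ : Measure (Char G)) : Prop :=
  ∀ φ : G → ℂ, IsCc φ → ∃ r : ℝ, 0 ≤ r ∧
    γ.integral (tildeConv θ φ φ) = (r : ℂ) ∧
    (∫⁻ χ, ENNReal.ofReal (‖checkFn θ φ χ‖ ^ 2) ∂σ) = ENNReal.ofReal r

end TBUse

section UniformDefs

variable {H : Type*} [UniformSpace H]

/-- `C_u(G)`: bounded uniformly continuous functions. -/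
def CuFun (f : H → ℂ) : Prop := UniformContinuous f ∧ ∃ C : ℝ, ∀ x, ‖f x‖ ≤ C

/-- Bohr (strong) almost periodicity. -/
def BohrAP [AddCommGroup H] (f : H → ℂ) : Prop :=
  CuFun f ∧ ∀ ε : ℝ, 0 < ε → RelDense {t : H | ∀ x, ‖f x - f (x - t)‖ ≤ ε}

end UniformDefs

end MAP

open MAP

/-!
Closedness is the triangle inequality for the Besicovitch seminorm. For completeness, pass to a
subsequence `F` with `‖F n - F m‖_{b,p} < 2⁻ᴺ` for `n, m ≥ N`. If `G` is compact, a van Hove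
sequence is eventually `G` itself, so the seminorm is a multiple of the `L^p` norm and the
Riesz–Fischer theorem provides the limit. Otherwise `|A ν| → ∞`. Choose `n k` such that the
`L^p(A ν)`-averages of `F (k + 1) - F k` are below `2⁻ᵏ` for `ν ≥ n k`, and glue `g := F k` on
the `k`-th layer of `W k = A 0 ∪ ⋯ ∪ A (n k) ∪ V k`, with `V` a compact exhaustion of `G`.
On `A ν \ W m` the difference `F (m + 1) - g` telescopes into increments that are all controlled
on `A ν`, while its `L^p` norm on `W m` is a fixed finite number, which disappears after dividing
by `|A ν|`.
-/

-- Unlike `ENNReal.limsup_add_le`, no `CountableInterFilter` is needed (`atTop` is not one).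
lemma ENNReal.limsup_add_le' {ι : Type*} {f : Filter ι} (u v : ι → ℝ≥0∞) :
    limsup (u + v) f ≤ limsup u f + limsup v f := by
  refine ENNReal.le_of_forall_pos_le_add fun ε hε hlim => limsup_le_of_le (by isBoundedDefault) ?_
  have hε2 : (ε / 2 : ℝ≥0∞) ≠ 0 := by simpa using hε.ne'
  obtain ⟨hu, hv⟩ := ENNReal.add_lt_top.mp hlim
  filter_upwards [eventually_lt_of_limsup_lt (ENNReal.lt_add_right hu.ne hε2),
    eventually_lt_of_limsup_lt (ENNReal.lt_add_right hv.ne hε2)] with n hun hvn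
  calc u n + v n ≤ limsup u f + ε / 2 + (limsup v f + ε / 2) := add_le_add hun.le hvn.le
    _ = limsup u f + limsup v f + ε := by rw [add_add_add_comm, ENNReal.add_halves]

namespace MAP

section Seminorm

variable {G : Type*} [MeasurableSpace G] {θ : Measure G} {A : ℕ → Set G} {p : ℝ}

lemma setLIntegral_ofReal_norm_rpow (hp : 0 < p) (S : Set G) (u : G → ℂ) :
    ∫⁻ t in S, ENNReal.ofReal (‖u t‖ ^ p) ∂θ = eLpNorm u (ENNReal.ofReal p) (θ.restrict S) ^ p := by
  have h := eLpNorm_nnreal_pow_eq_lintegral (f := u) (μ := θ.restrict S)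
    (Real.toNNReal_pos.mpr hp).ne'
  rw [Real.coe_toNNReal _ hp.le] at h
  rw [ENNReal.ofReal, h]
  exact lintegral_congr fun t => by
    rw [← ofReal_norm, ENNReal.ofReal_rpow_of_nonneg (norm_nonneg _) hp.le]

lemma besSN_eq_limsup (hp : 0 < p) (u : G → ℂ) :
    besSN θ A p u =
      limsup (fun ν => eLpNorm u (ENNReal.ofReal p) (θ.restrict (A ν)) / θ (A ν) ^ (1 / p))
        atTop := by
  have h := (ENNReal.orderIsoRpow (1 / p) (by positivity)).limsup_apply
    (u := fun ν => lpAvg θ (A ν) p u) (f := atTop)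
  simp only [ENNReal.orderIsoRpow_apply] at h
  rw [besSN, h]
  congr 1
  funext ν
  rw [lpAvg, setLIntegral_ofReal_norm_rpow hp, ENNReal.div_rpow_of_nonneg _ _ (by positivity),
    ← ENNReal.rpow_mul, mul_one_div_cancel hp.ne', ENNReal.rpow_one]

lemma besSN_congr_ae {u v : G → ℂ} (h : u =ᵐ[θ] v) : besSN θ A p u = besSN θ A p v := by
  have hint : ∀ ν, lpAvg θ (A ν) p u = lpAvg θ (A ν) p v := fun ν => by
    rw [lpAvg, lpAvg, lintegral_congr_ae (ae_restrict_of_ae (h.mono fun t ht => by rw [ht]))]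
  simp only [besSN, hint]

lemma besSN_sub_comm (hp : 0 < p) (u v : G → ℂ) : besSN θ A p (u - v) = besSN θ A p (v - u) := by
  simp only [besSN_eq_limsup hp, eLpNorm_sub_comm u v]

lemma besSN_add_le (hp : 1 ≤ p) {u v : G → ℂ} (hu : AEStronglyMeasurable u θ)
    (hv : AEStronglyMeasurable v θ) : besSN θ A p (u + v) ≤ besSN θ A p u + besSN θ A p v := by
  have hp0 : 0 < p := zero_lt_one.trans_le hp
  simp only [besSN_eq_limsup hp0]
  refine (limsup_le_limsup (Eventually.of_forall fun ν => ?_)).trans (ENNReal.limsup_add_le' _ _)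
  rw [Pi.add_apply, ← ENNReal.add_div]
  exact ENNReal.div_le_div_right (eLpNorm_add_le hu.restrict hv.restrict
    (ENNReal.one_le_ofReal.mpr hp)) _

lemma besSN_sub_le_add (hp : 1 ≤ p) {u v w : G → ℂ} (hu : AEStronglyMeasurable u θ)
    (hv : AEStronglyMeasurable v θ) (hw : AEStronglyMeasurable w θ) :
    besSN θ A p (u - w) ≤ besSN θ A p (u - v) + besSN θ A p (v - w) := by
  simpa only [sub_add_sub_cancel] using besSN_add_le hp (hu.sub hv) (hv.sub hw)

lemma eventually_eLpNorm_le_of_besSN_lt (hp : 0 < p) {u : G → ℂ} {c : ℝ≥0∞}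
    (h : besSN θ A p u < c) (hc : c ≠ ⊤) :
    ∀ᶠ ν in atTop, eLpNorm u (ENNReal.ofReal p) (θ.restrict (A ν)) ≤ c * θ (A ν) ^ (1 / p) := by
  rw [besSN_eq_limsup hp] at h
  filter_upwards [eventually_lt_of_limsup_lt h] with ν hν
  exact (ENNReal.div_le_iff_le_mul (Or.inr hc) (Or.inr (pos_of_gt hν).ne')).mp hν.le

lemma besSN_le_of_eLpNorm_le (hp : 0 < p) (hθ : Tendsto (fun ν => θ (A ν)) atTop (𝓝 ⊤))
    {u : G → ℂ} {C c : ℝ≥0∞} (hC : C ≠ ⊤)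
    (h : ∀ ν, eLpNorm u (ENNReal.ofReal p) (θ.restrict (A ν)) ≤ C + c * θ (A ν) ^ (1 / p)) :
    besSN θ A p u ≤ c := by
  have hroot : Tendsto (fun ν => θ (A ν) ^ (1 / p)) atTop (𝓝 ⊤) := by
    have h := (ENNReal.continuous_rpow_const (y := 1 / p)).tendsto ⊤
    rw [ENNReal.top_rpow_of_pos (one_div_pos.mpr hp)] at h
    exact h.comp hθ
  have hC0 : Tendsto (fun ν => C / θ (A ν) ^ (1 / p)) atTop (𝓝 0) := by
    simpa using ENNReal.Tendsto.const_div hroot (Or.inr hC)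
  rw [besSN_eq_limsup hp]
  calc limsup (fun ν => eLpNorm u (ENNReal.ofReal p) (θ.restrict (A ν)) / θ (A ν) ^ (1 / p)) atTop
      ≤ limsup ((fun ν => C / θ (A ν) ^ (1 / p)) + fun _ => c) atTop :=
        limsup_le_limsup (Eventually.of_forall fun ν => (ENNReal.div_le_div_right (h ν) _).trans
          (by rw [ENNReal.add_div]; exact add_le_add le_rfl (ENNReal.div_le_of_le_mul le_rfl)))
    _ ≤ c := by
        refine (ENNReal.limsup_add_le' _ _).trans ?_
        rw [hC0.limsup_eq, limsup_const, zero_add]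

lemma besSN_eq_of_eventually_eq (hp : 0 < p) {S : Set G} (h : ∀ᶠ ν in atTop, A ν = S)
    (u : G → ℂ) :
    besSN θ A p u = eLpNorm u (ENNReal.ofReal p) (θ.restrict S) / θ S ^ (1 / p) := by
  rw [besSN_eq_limsup hp, limsup_congr (h.mono fun ν hν => by rw [hν]), limsup_const]

end Seminorm

section LocalLp

variable {G : Type*} [MeasurableSpace G] [TopologicalSpace G] {θ : Measure G} {p : ℝ}

lemma memLpLoc_iff (hp : 0 < p) {f : G → ℂ} :
    MemLpLoc θ p f ↔ AEStronglyMeasurable f θ ∧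
      ∀ K : Set G, IsCompact K → MemLp f (ENNReal.ofReal p) (θ.restrict K) := by
  simp only [MemLpLoc, setLIntegral_ofReal_norm_rpow hp, ENNReal.rpow_lt_top_iff_of_pos hp]
  exact and_congr_right fun hf => forall₂_congr fun K _ => ⟨fun h => ⟨hf.restrict, h⟩, (·.2)⟩

lemma MemLpLoc.sub (hp : 0 < p) {f g : G → ℂ} (hf : MemLpLoc θ p f) (hg : MemLpLoc θ p g) :
    MemLpLoc θ p (f - g) := by
  rw [memLpLoc_iff hp] at *
  exact ⟨hf.1.sub hg.1, fun K hK => (hf.2 K hK).sub (hg.2 K hK)⟩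

lemma MemLpLoc.congr_ae (hp : 0 < p) {f g : G → ℂ} (hf : MemLpLoc θ p f) (hfg : f =ᵐ[θ] g) :
    MemLpLoc θ p g := by
  rw [memLpLoc_iff hp] at *
  exact ⟨hf.1.congr hfg, fun K hK => (hf.2 K hK).ae_eq (ae_restrict_of_ae hfg)⟩

lemma _root_.MeasureTheory.MemLp.memLpLoc (hp : 0 < p) {f : G → ℂ}
    (hf : MemLp f (ENNReal.ofReal p) θ) : MemLpLoc θ p f :=
  (memLpLoc_iff hp).2 ⟨hf.1, fun _ _ => hf.restrict _⟩

end LocalLp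

section Cauchy

variable {G : Type*} [MeasurableSpace G] {θ : Measure G} {A : ℕ → Set G} {p : ℝ}
  {f : ℕ → G → ℂ}

lemma exists_strictMono_besSN_sub_lt
    (hC : ∀ ε : ℝ, 0 < ε → ∃ N : ℕ, ∀ m ≥ N, ∀ n ≥ N,
      besSN θ A p (fun x => f m x - f n x) < ENNReal.ofReal ε) :
    ∃ φ : ℕ → ℕ, StrictMono φ ∧ ∀ N n m, N ≤ n → N ≤ m →
      besSN θ A p (f (φ n) - f (φ m)) < ENNReal.ofReal ((1 / 2) ^ N) := by
  obtain ⟨φ, hφ, hφC⟩ := extraction_forall_of_eventually'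
    (P := fun N k => ∀ m ≥ k, ∀ n ≥ k,
      besSN θ A p (fun x => f m x - f n x) < ENNReal.ofReal ((1 / 2) ^ N))
    fun N => by
      obtain ⟨M, hM⟩ := hC ((1 / 2) ^ N) (by positivity)
      exact ⟨M, fun k hk m hm n hn => hM m (hk.trans hm) n (hk.trans hn)⟩
  exact ⟨φ, hφ, fun N n m hn hm => hφC N _ (hφ.monotone hn) _ (hφ.monotone hm)⟩

lemma tendsto_besSN_sub_of_subseq (hp : 1 ≤ p) (hf : ∀ n, AEStronglyMeasurable (f n) θ)
    {g : G → ℂ} (hg : AEStronglyMeasurable g θ)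
    (hC : ∀ ε : ℝ, 0 < ε → ∃ N : ℕ, ∀ m ≥ N, ∀ n ≥ N,
      besSN θ A p (fun x => f m x - f n x) < ENNReal.ofReal ε)
    {φ : ℕ → ℕ} (hφ : Tendsto φ atTop atTop)
    (hlim : Tendsto (fun j => besSN θ A p (f (φ j) - g)) atTop (𝓝 0)) :
    Tendsto (fun n => besSN θ A p (fun x => f n x - g x)) atTop (𝓝 0) := by
  refine tendsto_order.2 ⟨fun _ h => absurd h ENNReal.not_lt_zero, fun ε hε => ?_⟩
  obtain ⟨r, -, hr0, hrε⟩ := ENNReal.lt_iff_exists_real_btwn.mp (ENNReal.half_pos hε.ne')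
  obtain ⟨N, hN⟩ := hC r (ENNReal.ofReal_pos.mp hr0)
  obtain ⟨j, hjN, hj⟩ := ((hφ.eventually_ge_atTop N).and
    (hlim.eventually (gt_mem_nhds (ENNReal.half_pos hε.ne')))).exists
  filter_upwards [eventually_ge_atTop N] with n hn
  calc besSN θ A p (f n - g)
      ≤ besSN θ A p (f n - f (φ j)) + besSN θ A p (f (φ j) - g) :=
        besSN_sub_le_add hp (hf n) (hf _) hg
    _ < ε / 2 + ε / 2 := ENNReal.add_lt_add ((hN n hn _ hjN).trans hrε) hj
    _ = ε := ENNReal.add_halves ε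

end Cauchy

section Bap

variable {G : Type*} [AddCommGroup G] [TopologicalSpace G]

lemma IsTrigPoly.continuous {P : G → ℂ} (hP : IsTrigPoly P) : Continuous P := by
  obtain ⟨n, c, χ, rfl⟩ := hP
  exact continuous_finsetSum _ fun i _ => continuous_const.mul (χ i).1.continuous

variable [MeasurableSpace G] [OpensMeasurableSpace G] {θ : Measure G} {A : ℕ → Set G} {p : ℝ}

lemma BapMem.of_tendsto (hp : 1 ≤ p) {f : ℕ → G → ℂ} {g : G → ℂ}
    (hf : ∀ n, BapMem θ A p (f n)) (hg : MemLpLoc θ p g)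
    (hfg : Tendsto (fun n => besSN θ A p (fun x => f n x - g x)) atTop (𝓝 0)) :
    BapMem θ A p g := by
  refine ⟨hg, fun ε hε => ?_⟩
  have hε2 : 0 < ENNReal.ofReal (ε / 2) := ENNReal.ofReal_pos.mpr (half_pos hε)
  obtain ⟨n, hn⟩ := (hfg.eventually (gt_mem_nhds hε2)).exists
  obtain ⟨P, hP, hPn⟩ := (hf n).2 (ε / 2) (half_pos hε)
  refine ⟨P, hP, ?_⟩
  calc besSN θ A p (g - P)
      ≤ besSN θ A p (g - f n) + besSN θ A p (f n - P) :=
        besSN_sub_le_add hp hg.1 (hf n).1.1 hP.continuous.aestronglyMeasurable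
    _ < ENNReal.ofReal (ε / 2) + ENNReal.ofReal (ε / 2) :=
        ENNReal.add_lt_add (by rwa [besSN_sub_comm (zero_lt_one.trans_le hp)]) hPn
    _ = ENNReal.ofReal ε := by
        rw [← ENNReal.ofReal_add (half_pos hε).le (half_pos hε).le, add_halves]

end Bap

lemma exists_isCompact_lt_measure {G : Type*} [TopologicalSpace G] [SigmaCompactSpace G]
    [MeasurableSpace G] (θ : Measure G) {r : ℝ≥0∞} (hr : r < θ Set.univ) :
    ∃ K : Set G, IsCompact K ∧ r < θ K := by
  have h := tendsto_measure_iUnion_atTop (μ := θ) (compactCovering_subset G)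
  rw [iUnion_compactCovering] at h
  obtain ⟨n, hn⟩ := (h.eventually (lt_mem_nhds hr)).exists
  exact ⟨_, isCompact_compactCovering G n, hn⟩

section VanHove

variable {G : Type*} [AddCommGroup G] [TopologicalSpace G]

lemma kBoundary_univ {S : Set G} (hS : S.Nonempty) (hSc : Sᶜ.Nonempty) :
    kBoundary Set.univ S = Set.univ := by
  refine Set.eq_univ_of_forall fun x => ?_
  by_cases hx : x ∈ closure S
  · obtain ⟨a, ha⟩ := hSc
    exact Or.inr ⟨by simpa using Set.sub_mem_sub ha (Set.mem_univ (a - x)), hx⟩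
  · obtain ⟨a, ha⟩ := hS
    refine Or.inl ⟨subset_closure ?_, fun h => hx (subset_closure h)⟩
    simpa using Set.add_mem_add ha (Set.mem_univ (x - a))

variable [MeasurableSpace G] {θ : Measure G} {A : ℕ → Set G}

lemma measure_le_add_measure_kBoundary [θ.IsAddLeftInvariant] (K : Set G) {S : Set G}
    (hS : S.Nonempty) : θ K ≤ θ S + θ (kBoundary K S) := by
  obtain ⟨a, ha⟩ := hS
  have hsub : a +ᵥ K ⊆ S ∪ kBoundary K S := by
    rintro _ ⟨k, hk, rfl⟩
    by_cases hak : a +ᵥ k ∈ S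
    · exact Or.inl hak
    · exact Or.inr (Or.inl ⟨subset_closure (Set.add_mem_add ha hk), hak⟩)
  calc θ K = θ (a +ᵥ K) := (measure_vadd θ a K).symm
    _ ≤ θ (S ∪ kBoundary K S) := measure_mono hsub
    _ ≤ θ S + θ (kBoundary K S) := measure_union_le _ _

namespace IsVanHove

lemma measure_ne_zero [θ.IsOpenPosMeasure] (hA : IsVanHove θ A) (ν : ℕ) : θ (A ν) ≠ 0 :=
  (hA.isOpen ν).measure_ne_zero θ (hA.nonempty ν)

lemma measure_ne_top [IsFiniteMeasureOnCompacts θ] (hA : IsVanHove θ A) (ν : ℕ) :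
    θ (A ν) ≠ ⊤ :=
  (measure_mono subset_closure |>.trans_lt (hA.relCompact ν).measure_lt_top).ne

lemma eventually_measure_kBoundary_lt [θ.IsOpenPosMeasure] [IsFiniteMeasureOnCompacts θ]
    (hA : IsVanHove θ A) {K : Set G} (hK : IsCompact K) :
    ∀ᶠ ν in atTop, θ (kBoundary K (A ν)) < θ (A ν) := by
  filter_upwards [(hA.boundary K hK).eventually (gt_mem_nhds zero_lt_one)] with ν hν
  simpa using (ENNReal.div_lt_iff (Or.inl (hA.measure_ne_zero ν))
    (Or.inl (hA.measure_ne_top ν))).mp hν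

lemma eventually_eq_univ [CompactSpace G] [θ.IsOpenPosMeasure] [IsFiniteMeasureOnCompacts θ]
    (hA : IsVanHove θ A) : ∀ᶠ ν in atTop, A ν = Set.univ := by
  filter_upwards [hA.eventually_measure_kBoundary_lt isCompact_univ] with ν hν
  by_contra hne
  rw [kBoundary_univ (hA.nonempty ν) (Set.nonempty_compl.mpr hne)] at hν
  exact (measure_mono (Set.subset_univ _)).not_gt hν

lemma tendsto_measure_atTop [SigmaCompactSpace G] [θ.IsAddLeftInvariant] [θ.IsOpenPosMeasure]
    [IsFiniteMeasureOnCompacts θ] (hA : IsVanHove θ A) (huniv : θ Set.univ = ⊤) :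
    Tendsto (fun ν => θ (A ν)) atTop (𝓝 ⊤) := by
  refine ENNReal.tendsto_nhds_top fun n => ?_
  obtain ⟨K, hK, hKn⟩ := exists_isCompact_lt_measure θ
    (huniv ▸ ENNReal.mul_lt_top (ENNReal.ofNat_lt_top (n := 2)) (ENNReal.natCast_lt_top n))
  filter_upwards [hA.eventually_measure_kBoundary_lt hK] with ν hν
  have h2 : θ K ≤ 2 * θ (A ν) := by
    calc θ K ≤ θ (A ν) + θ (kBoundary K (A ν)) :=
          measure_le_add_measure_kBoundary K (hA.nonempty ν)
      _ ≤ 2 * θ (A ν) := by rw [two_mul]; exact add_le_add le_rfl hν.le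
  exact (ENNReal.mul_lt_mul_iff_right two_ne_zero ENNReal.ofNat_ne_top).mp (hKn.trans_le h2)

end IsVanHove

end VanHove

section CompactCase

variable {G : Type*} [MeasurableSpace G] {θ : Measure G} {A : ℕ → Set G} {p : ℝ}

lemma exists_memLp_tendsto_besSN_of_eventually_eq_univ [IsFiniteMeasure θ] (hp : 1 ≤ p)
    (hθ : θ Set.univ ≠ 0) (hA : ∀ᶠ ν in atTop, A ν = Set.univ) {F : ℕ → G → ℂ}
    (hF : ∀ n, MemLp (F n) (ENNReal.ofReal p) θ)
    (hfast : ∀ N n m, N ≤ n → N ≤ m →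
      besSN θ A p (F n - F m) < ENNReal.ofReal ((1 / 2) ^ N)) :
    ∃ g, MemLp g (ENNReal.ofReal p) θ ∧
      Tendsto (fun n => besSN θ A p (F n - g)) atTop (𝓝 0) := by
  have hp0 : 0 < p := zero_lt_one.trans_le hp
  set c := θ Set.univ ^ (1 / p)
  have hc0 : c ≠ 0 := by simp [c, ENNReal.rpow_eq_zero_iff, hθ]
  have hct : c ≠ ⊤ := ENNReal.rpow_ne_top_of_nonneg (by positivity) (measure_ne_top θ _)
  have hbes : ∀ u, besSN θ A p u = eLpNorm u (ENNReal.ofReal p) θ / c := fun u => by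
    rw [besSN_eq_of_eventually_eq hp0 hA, Measure.restrict_univ]
  have hB : ∑' N : ℕ, ENNReal.ofReal ((1 / 2) ^ N) * c ≠ ⊤ := by
    rw [ENNReal.tsum_mul_right, ← ENNReal.ofReal_tsum_of_nonneg (fun _ => by positivity)
      (summable_geometric_two)]
    exact ENNReal.mul_ne_top ENNReal.ofReal_ne_top hct
  obtain ⟨g, hg, hlim⟩ := Lp.cauchy_complete_eLpNorm (ENNReal.one_le_ofReal.mpr hp) hF hB
    fun N n m hn hm => by
      have h := hfast N n m hn hm
      rwa [hbes, ENNReal.div_lt_iff (Or.inl hc0) (Or.inl hct)] at h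
  refine ⟨g, hg, ?_⟩
  simp_rw [hbes]
  simpa using ENNReal.Tendsto.div_const hlim (Or.inr hc0)

end CompactCase

section Glue

variable {α β : Type*} {W : ℕ → Set α} (hW : ∀ x, ∃ k, x ∈ W k)

open Classical in
def glue (F : ℕ → α → β) : α → β :=
  fun x => F (Nat.find (hW x)) x

open Classical in
lemma measurable_glue [MeasurableSpace α] [MeasurableSpace β] (hWm : ∀ k, MeasurableSet (W k))
    {F : ℕ → α → β} (hF : ∀ n, Measurable (F n)) : Measurable (glue hW F) :=
  Measurable.find (p := fun n x => x ∈ W n) hF hWm hW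

variable {F : ℕ → α → ℂ}

lemma norm_glue_le {x : α} {k : ℕ} (hx : x ∈ W k) :
    ‖glue hW F x‖ ≤ ∑ j ∈ Finset.range (k + 1), ‖F j x‖ := by
  classical
  exact Finset.single_le_sum (f := fun j => ‖F j x‖) (fun _ _ => norm_nonneg _)
    (Finset.mem_range.mpr (Nat.lt_succ_of_le (Nat.find_min' (hW x) hx)))

lemma norm_sub_glue_le (hmono : Monotone W) {x : α} {m : ℕ} (hxm : x ∉ W m) {s : Finset ℕ}
    (hs : ∀ i, m < i → x ∉ W i → i ∈ s) :
    ‖F (m + 1) x - glue hW F x‖ ≤ ∑ i ∈ s, ‖F (i + 1) x - F i x‖ := by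
  classical
  have hmj : m + 1 ≤ Nat.find (hW x) := by
    by_contra h
    exact hxm (hmono (by omega) (Nat.find_spec (hW x)))
  calc ‖F (m + 1) x - glue hW F x‖
      = ‖∑ i ∈ Finset.Ico (m + 1) (Nat.find (hW x)), (F (i + 1) x - F i x)‖ := by
        rw [Finset.sum_Ico_sub (fun i => F i x) hmj, norm_sub_rev]
        rfl
    _ ≤ ∑ i ∈ Finset.Ico (m + 1) (Nat.find (hW x)), ‖F (i + 1) x - F i x‖ := norm_sum_le _ _
    _ ≤ ∑ i ∈ s, ‖F (i + 1) x - F i x‖ :=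
        Finset.sum_le_sum_of_subset_of_nonneg
          (fun i hi => hs i (Finset.mem_Ico.mp hi).1 (Nat.find_min (hW x) (Finset.mem_Ico.mp hi).2))
          fun _ _ _ => norm_nonneg _

variable [MeasurableSpace α] {μ : Measure α}

lemma memLpLoc_glue [TopologicalSpace α] {p : ℝ} (hp : 0 < p) (hWm : ∀ k, MeasurableSet (W k))
    (hK : ∀ K, IsCompact K → ∃ k, K ⊆ W k) (hF : ∀ n, Measurable (F n))
    (hFloc : ∀ n, MemLpLoc μ p (F n)) : MemLpLoc μ p (glue hW F) := by
  rw [memLpLoc_iff hp]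
  refine ⟨(measurable_glue hW hWm hF).aestronglyMeasurable, fun K hKc => ?_⟩
  obtain ⟨k, hk⟩ := hK K hKc
  have hsum : MemLp (fun x => ∑ j ∈ Finset.range (k + 1), ‖F j x‖) (ENNReal.ofReal p)
      (μ.restrict K) :=
    memLp_finsetSum _ fun j _ => (((memLpLoc_iff hp).mp (hFloc j)).2 K hKc).norm
  have hle : ∀ x ∈ W k, ‖glue hW F x‖ ≤ ‖∑ j ∈ Finset.range (k + 1), ‖F j x‖‖ := fun x hx => by
    rw [Real.norm_of_nonneg (Finset.sum_nonneg fun _ _ => norm_nonneg _)]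
    exact norm_glue_le hW hx
  exact hsum.of_le (measurable_glue hW hWm hF).aestronglyMeasurable.restrict
    (ae_restrict_of_ae_restrict_of_subset hk (ae_restrict_of_forall_mem (hWm k) hle))

lemma eLpNorm_sub_glue_le {q : ℝ≥0∞} (hq : 1 ≤ q) (hmono : Monotone W)
    (hWm : ∀ k, MeasurableSet (W k)) (hF : ∀ n, Measurable (F n)) {S : Set α}
    (hS : MeasurableSet S) (m : ℕ) {s : Finset ℕ} (hs : ∀ x ∈ S, ∀ i, m < i → x ∉ W i → i ∈ s) :
    eLpNorm (F (m + 1) - glue hW F) q (μ.restrict S) ≤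
      eLpNorm (F (m + 1) - glue hW F) q (μ.restrict (W m)) +
        ∑ i ∈ s, eLpNorm (F (i + 1) - F i) q (μ.restrict S) := by
  set u := F (m + 1) - glue hW F
  have hu : Measurable u := (hF _).sub (measurable_glue hW hWm hF)
  have hpt : ∀ x ∈ S, ‖u x‖ ≤
      ((W m).indicator (fun y => ‖u y‖) + ∑ i ∈ s, fun y => ‖F (i + 1) y - F i y‖) x := by
    intro x hx
    rw [Pi.add_apply, Finset.sum_apply]
    by_cases hxm : x ∈ W m
    · rw [Set.indicator_of_mem hxm]
      exact le_add_of_nonneg_right (Finset.sum_nonneg fun _ _ => norm_nonneg _)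
    · rw [Set.indicator_of_notMem hxm, zero_add]
      exact norm_sub_glue_le hW hmono hxm (hs x hx)
  calc eLpNorm u q (μ.restrict S)
      ≤ eLpNorm ((W m).indicator (fun y => ‖u y‖) + ∑ i ∈ s, fun y => ‖F (i + 1) y - F i y‖) q
          (μ.restrict S) := eLpNorm_mono_ae_real (ae_restrict_of_forall_mem hS hpt)
    _ ≤ eLpNorm ((W m).indicator (fun y => ‖u y‖)) q (μ.restrict S) +
          ∑ i ∈ s, eLpNorm (fun y => ‖F (i + 1) y - F i y‖) q (μ.restrict S) :=
        (eLpNorm_add_le (hu.norm.indicator (hWm m)).aestronglyMeasurable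
          (Finset.aestronglyMeasurable_sum _ fun i _ =>
            ((hF _).sub (hF _)).norm.aestronglyMeasurable) hq).trans
          (add_le_add le_rfl (eLpNorm_sum_le (fun i _ =>
            ((hF _).sub (hF _)).norm.aestronglyMeasurable) hq))
    _ ≤ eLpNorm u q (μ.restrict (W m)) + ∑ i ∈ s, eLpNorm (F (i + 1) - F i) q (μ.restrict S) := by
        rw [← eLpNorm_indicator_eq_eLpNorm_restrict (hWm m)]
        refine add_le_add ?_ (le_of_eq (Finset.sum_congr rfl fun i _ => eLpNorm_norm _))
        rw [← eLpNorm_norm ((W m).indicator u)]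
        simp only [norm_indicator_eq_indicator_norm]
        exact eLpNorm_mono_measure _ Measure.restrict_le_self

end Glue

lemma sum_ofReal_half_pow_le {m : ℕ} {s : Finset ℕ} (hs : ∀ i ∈ s, m < i) :
    ∑ i ∈ s, ENNReal.ofReal ((1 / 2) ^ i) ≤ ENNReal.ofReal ((1 / 2) ^ m) := by
  rw [← ENNReal.ofReal_sum_of_nonneg fun _ _ => by positivity]
  refine ENNReal.ofReal_le_ofReal ?_
  calc ∑ i ∈ s, (1 / 2 : ℝ) ^ i ≤ ∑ i ∈ Finset.Ico (m + 1) (s.sup id + 1), (1 / 2 : ℝ) ^ i :=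
        Finset.sum_le_sum_of_subset_of_nonneg (fun i hi => Finset.mem_Ico.mpr
          ⟨hs i hi, Nat.lt_succ_of_le (Finset.le_sup (f := id) hi)⟩) fun _ _ _ => by positivity
    _ ≤ (1 / 2) ^ (m + 1) / (1 - 1 / 2) := geom_sum_Ico_le_of_lt_one (by norm_num) (by norm_num)
    _ = (1 / 2) ^ m := by ring

section NoncompactCase

variable {G : Type*} [TopologicalSpace G] [T2Space G] [WeaklyLocallyCompactSpace G]
  [SigmaCompactSpace G] [MeasurableSpace G] [OpensMeasurableSpace G]
  {θ : Measure G} {A : ℕ → Set G} {p : ℝ}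

lemma exists_exhaustion_superset (hAm : ∀ ν, MeasurableSet (A ν))
    (hAc : ∀ ν, IsCompact (closure (A ν))) {n : ℕ → ℕ} (hn : Monotone n) :
    ∃ W : ℕ → Set G, Monotone W ∧ (∀ k, MeasurableSet (W k)) ∧
      (∀ k, ∃ K, IsCompact K ∧ W k ⊆ K) ∧ (∀ K, IsCompact K → ∃ k, K ⊆ W k) ∧
      ∀ {ν k}, ν ≤ n k → A ν ⊆ W k := by
  set V := CompactExhaustion.choice G
  refine ⟨fun k => (⋃ ν ∈ Set.Iic (n k), A ν) ∪ V k, fun j k hjk => ?_, fun k => ?_,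
    fun k => ?_, fun K hK => ?_, fun h => ?_⟩
  · exact Set.union_subset_union
      (Set.biUnion_subset_biUnion_left (Set.Iic_subset_Iic.mpr (hn hjk))) (V.subset hjk)
  · exact (MeasurableSet.biUnion (Set.to_countable _) fun ν _ => hAm ν).union
      (V.isCompact k).measurableSet
  · exact ⟨(⋃ ν ∈ Set.Iic (n k), closure (A ν)) ∪ V k,
      ((Set.finite_Iic _).isCompact_biUnion fun ν _ => hAc ν).union (V.isCompact k),
      Set.union_subset_union (Set.iUnion₂_mono fun _ _ => subset_closure) subset_rfl⟩
  · exact (V.exists_superset_of_isCompact hK).imp fun _ hk => hk.trans Set.subset_union_right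
  · exact (Set.subset_biUnion_of_mem (u := A) (Set.mem_Iic.mpr h)).trans Set.subset_union_left

lemma exists_memLpLoc_besSN_sub_le (hp : 1 ≤ p) (hAm : ∀ ν, MeasurableSet (A ν))
    (hAc : ∀ ν, IsCompact (closure (A ν))) (hθ : Tendsto (fun ν => θ (A ν)) atTop (𝓝 ⊤))
    {F : ℕ → G → ℂ} (hFm : ∀ n, Measurable (F n)) (hF : ∀ n, MemLpLoc θ p (F n))
    (hfast : ∀ i, besSN θ A p (F (i + 1) - F i) < ENNReal.ofReal ((1 / 2) ^ i)) :
    ∃ g, MemLpLoc θ p g ∧ ∀ m, besSN θ A p (F (m + 1) - g) ≤ ENNReal.ofReal ((1 / 2) ^ m) := by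
  have hp0 : 0 < p := zero_lt_one.trans_le hp
  obtain ⟨n, hn, hbound⟩ := extraction_forall_of_eventually'
    (P := fun i k => ∀ ν ≥ k, eLpNorm (F (i + 1) - F i) (ENNReal.ofReal p) (θ.restrict (A ν)) ≤
      ENNReal.ofReal ((1 / 2) ^ i) * θ (A ν) ^ (1 / p)) fun i => by
    obtain ⟨N, hN⟩ := eventually_atTop.mp
      (eventually_eLpNorm_le_of_besSN_lt hp0 (hfast i) ENNReal.ofReal_ne_top)
    exact ⟨N, fun k hk ν hν => hN ν (hk.trans hν)⟩
  obtain ⟨W, hWmono, hWm, hWK, hKW, hAW⟩ := exists_exhaustion_superset hAm hAc hn.monotone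
  have hWcov : ∀ x, ∃ k, x ∈ W k := fun x =>
    (hKW {x} isCompact_singleton).imp fun _ hk => hk rfl
  have hg : MemLpLoc θ p (glue hWcov F) := memLpLoc_glue hWcov hp0 hWm hKW hFm hF
  refine ⟨glue hWcov F, hg, fun m => ?_⟩
  obtain ⟨K, hK, hWmK⟩ := hWK m
  have hC : eLpNorm (F (m + 1) - glue hWcov F) (ENNReal.ofReal p) (θ.restrict (W m)) ≠ ⊤ :=
    ((eLpNorm_mono_measure _ (Measure.restrict_mono hWmK le_rfl)).trans_lt
      (((memLpLoc_iff hp0).mp ((hF _).sub hp0 hg)).2 K hK).2).ne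
  refine besSN_le_of_eLpNorm_le hp0 hθ hC fun ν => ?_
  -- off `W m`, only increments `F (i + 1) - F i` with `n i ≤ ν` are needed on `A ν`
  have hs : ∀ x ∈ A ν, ∀ i, m < i → x ∉ W i → i ∈ (Finset.Ioo m ν).filter (n · ≤ ν) :=
    fun x hx i hmi hxi => by
      have hni : n i < ν := lt_of_not_ge fun h => hxi (hAW h hx)
      exact Finset.mem_filter.mpr ⟨Finset.mem_Ioo.mpr ⟨hmi, (hn.id_le i).trans_lt hni⟩, hni.le⟩
  refine (eLpNorm_sub_glue_le hWcov (ENNReal.one_le_ofReal.mpr hp) hWmono hWm hFm (hAm ν) m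
    hs).trans (add_le_add le_rfl ?_)
  calc ∑ i ∈ (Finset.Ioo m ν).filter (n · ≤ ν),
        eLpNorm (F (i + 1) - F i) (ENNReal.ofReal p) (θ.restrict (A ν))
      ≤ ∑ i ∈ (Finset.Ioo m ν).filter (n · ≤ ν), ENNReal.ofReal ((1 / 2) ^ i) * θ (A ν) ^ (1 / p) :=
        Finset.sum_le_sum fun i hi => hbound i ν (Finset.mem_filter.mp hi).2
    _ ≤ ENNReal.ofReal ((1 / 2) ^ m) * θ (A ν) ^ (1 / p) := by
        rw [← Finset.sum_mul]
        gcongr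
        exact sum_ofReal_half_pow_le fun i hi =>
          (Finset.mem_Ioo.mp (Finset.mem_filter.mp hi).1).1

end NoncompactCase

lemma exists_memLpLoc_tendsto_besSN {G : Type*} [AddCommGroup G] [TopologicalSpace G]
    [IsTopologicalAddGroup G] [LocallyCompactSpace G] [SigmaCompactSpace G] [T2Space G]
    [MeasurableSpace G] [BorelSpace G] {θ : Measure G} [θ.IsAddHaarMeasure] {p : ℝ} (hp : 1 ≤ p)
    {A : ℕ → Set G} (hA : IsVanHove θ A) {F : ℕ → G → ℂ} (hF : ∀ n, MemLpLoc θ p (F n))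
    (hfast : ∀ N n m, N ≤ n → N ≤ m →
      besSN θ A p (F n - F m) < ENNReal.ofReal ((1 / 2) ^ N)) :
    ∃ g, MemLpLoc θ p g ∧ Tendsto (fun n => besSN θ A p (F n - g)) atTop (𝓝 0) := by
  have hp0 : 0 < p := zero_lt_one.trans_le hp
  by_cases hG : CompactSpace G
  · have hFp : ∀ n, MemLp (F n) (ENNReal.ofReal p) θ := fun n => by
      simpa using ((memLpLoc_iff hp0).mp (hF n)).2 _ isCompact_univ
    have hθ : θ Set.univ ≠ 0 :=
      isOpen_univ.measure_ne_zero θ ⟨_, Set.mem_univ (hA.nonempty 0).some⟩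
    obtain ⟨g, hg, hlim⟩ :=
      exists_memLp_tendsto_besSN_of_eventually_eq_univ hp hθ hA.eventually_eq_univ hFp hfast
    exact ⟨g, hg.memLpLoc hp0, hlim⟩
  · have : NoncompactSpace G := not_compactSpace_iff.mp hG
    have hFF' : ∀ n, F n =ᵐ[θ] (hF n).1.mk (F n) := fun n => (hF n).1.ae_eq_mk
    obtain ⟨g, hg, hle⟩ := exists_memLpLoc_besSN_sub_le hp (fun ν => (hA.isOpen ν).measurableSet)
      hA.relCompact (hA.tendsto_measure_atTop (measure_univ_of_isAddLeftInvariant θ))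
      (fun n => (hF n).1.stronglyMeasurable_mk.measurable)
      (fun n => (hF n).congr_ae hp0 (hFF' n)) fun i => by
        rw [← besSN_congr_ae ((hFF' _).sub (hFF' i))]
        exact hfast i (i + 1) i (Nat.le_succ i) le_rfl
    have hhalf : Tendsto (fun m : ℕ => ENNReal.ofReal ((1 / 2) ^ m)) atTop (𝓝 0) := by
      simpa using ENNReal.tendsto_ofReal
        (tendsto_pow_atTop_nhds_zero_of_lt_one (by norm_num : (0 : ℝ) ≤ 1 / 2) (by norm_num))
    refine ⟨g, hg, (tendsto_add_atTop_iff_nat 1).mp ?_⟩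
    refine tendsto_of_tendsto_of_tendsto_of_le_of_le tendsto_const_nhds hhalf (fun _ => zero_le)
      fun m => ?_
    exact (besSN_congr_ae ((hFF' _).sub EventuallyEq.rfl)).le.trans (hle m)

end MAP

theorem statement9
    {G : Type*} [AddCommGroup G] [TopologicalSpace G] [IsTopologicalAddGroup G]
    [LocallyCompactSpace G] [SigmaCompactSpace G] [T2Space G]
    [MeasurableSpace G] [BorelSpace G]
    (θ : Measure G) [θ.IsAddHaarMeasure]
    (p : ℝ) (hp : 1 ≤ p) (A : ℕ → Set G) (hA : IsVanHove θ A) :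
    (∀ (f : ℕ → G → ℂ) (g : G → ℂ), (∀ n, BapMem θ A p (f n)) →
      (MemLpLoc θ p g ∧ besSN θ A p g < ⊤) →
      Tendsto (fun n => besSN θ A p (fun x => f n x - g x)) atTop (𝓝 0) →
      BapMem θ A p g) ∧
    (∀ f : ℕ → G → ℂ, (∀ n, BapMem θ A p (f n)) →
      (∀ ε : ℝ, 0 < ε → ∃ N : ℕ, ∀ m ≥ N, ∀ n ≥ N,
        besSN θ A p (fun x => f m x - f n x) < ENNReal.ofReal ε) →
      ∃ g : G → ℂ, BapMem θ A p g ∧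
        Tendsto (fun n => besSN θ A p (fun x => f n x - g x)) atTop (𝓝 0)) := by
  refine ⟨fun f g hf hg hfg => BapMem.of_tendsto hp hf hg.1 hfg, fun f hf hC => ?_⟩
  obtain ⟨φ, hφ, hfast⟩ := exists_strictMono_besSN_sub_lt hC
  obtain ⟨g, hg, hlim⟩ := exists_memLpLoc_tendsto_besSN hp hA (fun j => (hf (φ j)).1) hfast
  have hconv := tendsto_besSN_sub_of_subseq hp (fun n => (hf n).1.1) hg.1 hC hφ.tendsto_atTop hlim
  exact ⟨g, BapMem.of_tendsto hp hf hg hconv, hconv⟩
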